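/- arXiv:1604.03908 — 4 statements merged into one kernel-verified Lean document; each statement's English description precedes it below -/
import Mathlib

section
/- Let n ≥ 2 be an integer and let G be the abelian group with presentation ⟨a, d, A | A^2 = a^{-2n}, A^{(n-1)^2} = 1, d^2 = A^{n+1}⟩ (in the category of abelian groups). If n is odd, then G ≅ Z/2Z × Z/2Z × Z/(n(n-1)^2)Z. If n is even, then G ≅ Z/2Z × Z/(2n(n-1)^2)Z. -/
/-!
Both isomorphisms come from explicit surjections `ℤ³ → target` whose kernel is the relation
subgroup, i.e. from the Smith normal form of the relation matrix. For `n = 2k + 1` the map is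
`x ↦ (x₂, x₃, L x)` with `L x = x₁ - n x₃ - n (n + 1)/2 x₂`: `L` kills `(2n, 0, 2)` and
`(0, 2, -(n + 1))` and sends `(0, 0, (n - 1)²)` to `-n(n - 1)²`. For `n = 2k` the map is
`x ↦ (x₂, L x)` with `L x = x₁ + e x₃ + e (n + 1)/2 x₂`, `e = n²(n - 2)`: now `L` kills
`(0, 2, -(n + 1))`, sends `(2n, 0, 2)` to `2n(n - 1)²` and `(0, 0, (n - 1)²)` to a multiple of it.
Conversely, every element of either kernel is an explicit integer combination of the relations.
-/

lemma QuotientAddGroup.nonempty_addEquiv_of_ker_eq {G H : Type*} [AddCommGroup G] [AddGroup H]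
    {S : AddSubgroup G} (φ : G →+ H) (hφ : Function.Surjective φ) (hS : S = φ.ker) :
    Nonempty (G ⧸ S ≃+ H) := by
  subst hS
  exact ⟨QuotientAddGroup.quotientKerEquivOfSurjective φ hφ⟩

def relationSubgroup (n : ℤ) : AddSubgroup (ℤ × ℤ × ℤ) :=
  AddSubgroup.closure {(2 * n, 0, 2), (0, 0, (n - 1) ^ 2), (0, 2, -(n + 1))}

lemma relationSubgroup_le_iff {n : ℤ} {K : AddSubgroup (ℤ × ℤ × ℤ)} :
    relationSubgroup n ≤ K ↔
      (2 * n, 0, 2) ∈ K ∧ (0, 0, (n - 1) ^ 2) ∈ K ∧ (0, 2, -(n + 1)) ∈ K := by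
  simp only [relationSubgroup, AddSubgroup.closure_le, Set.insert_subset_iff,
    Set.singleton_subset_iff, SetLike.mem_coe]

lemma zsmul_add_zsmul_add_zsmul_mem_relationSubgroup (n a b c : ℤ) :
    a • (2 * n, 0, 2) + b • (0, 0, (n - 1) ^ 2) + c • (0, 2, -(n + 1)) ∈
      relationSubgroup n := by
  obtain ⟨h₁, h₂, h₃⟩ := relationSubgroup_le_iff.1 (le_refl (relationSubgroup n))
  exact add_mem (add_mem (zsmul_mem h₁ a) (zsmul_mem h₂ b)) (zsmul_mem h₃ c)

section Odd

variable (k : ℤ) (m : ℕ)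

def oddLinearForm (x : ℤ × ℤ × ℤ) : ℤ :=
  x.1 - (2 * k + 1) * x.2.2 - (2 * k + 1) * (k + 1) * x.2.1

def oddQuotientMap : ℤ × ℤ × ℤ →+ ZMod 2 × ZMod 2 × ZMod m :=
  AddMonoidHom.mk' (fun x => (x.2.1, x.2.2, oddLinearForm k x)) fun x y => by
    simp only [oddLinearForm, Prod.fst_add, Prod.snd_add, Prod.mk_add_mk]
    push_cast
    ring_nf

lemma oddQuotientMap_eq_zero_iff (x : ℤ × ℤ × ℤ) :
    oddQuotientMap k m x = 0 ↔ 2 ∣ x.2.1 ∧ 2 ∣ x.2.2 ∧ (m : ℤ) ∣ oddLinearForm k x := by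
  simp only [oddQuotientMap, AddMonoidHom.mk'_apply, Prod.mk_eq_zero,
    ZMod.intCast_zmod_eq_zero_iff_dvd, Nat.cast_ofNat]

lemma oddQuotientMap_surjective : Function.Surjective (oddQuotientMap k m) := by
  rintro ⟨u, v, w⟩
  obtain ⟨a, rfl⟩ := ZMod.intCast_surjective u
  obtain ⟨b, rfl⟩ := ZMod.intCast_surjective v
  obtain ⟨c, rfl⟩ := ZMod.intCast_surjective w
  refine ⟨(c + (2 * k + 1) * b + (2 * k + 1) * (k + 1) * a, a, b), ?_⟩
  simp only [oddQuotientMap, oddLinearForm, AddMonoidHom.mk'_apply]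
  ring_nf

theorem relationSubgroup_eq_ker_oddQuotientMap (hm : (m : ℤ) = 4 * k ^ 2 * (2 * k + 1)) :
    relationSubgroup (2 * k + 1) = (oddQuotientMap k m).ker := by
  refine le_antisymm ?_ fun x hx => ?_
  · simp only [relationSubgroup_le_iff, AddMonoidHom.mem_ker, oddQuotientMap_eq_zero_iff,
      oddLinearForm, hm]
    refine ⟨⟨⟨0, by ring⟩, ⟨1, by ring⟩, ⟨0, by ring⟩⟩,
      ⟨⟨0, by ring⟩, ⟨2 * k ^ 2, by ring⟩, ⟨-1, by ring⟩⟩,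
      ⟨⟨1, by ring⟩, ⟨-(k + 1), by ring⟩, ⟨0, by ring⟩⟩⟩
  · obtain ⟨x₁, x₂, x₃⟩ := x
    obtain ⟨⟨s, rfl⟩, ⟨t, rfl⟩, u, hu⟩ := (oddQuotientMap_eq_zero_iff k m _).1 hx
    obtain rfl : x₁ = m * u + (2 * k + 1) * (2 * t) + (2 * k + 1) * (k + 1) * (2 * s) := by
      simp only [oddLinearForm] at hu; linarith
    convert zsmul_add_zsmul_add_zsmul_mem_relationSubgroup (2 * k + 1)
      (2 * k ^ 2 * u + t + (k + 1) * s) (-u) s using 1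
    simp only [hm, Prod.smul_mk, smul_eq_mul, Prod.mk_add_mk, Prod.mk.injEq]
    exact ⟨by ring, by ring, by ring⟩

end Odd

section Even

variable (k : ℤ) (m : ℕ)

def evenLinearForm (x : ℤ × ℤ × ℤ) : ℤ :=
  x.1 + 8 * k ^ 2 * (k - 1) * x.2.2 + 4 * k ^ 2 * (k - 1) * (2 * k + 1) * x.2.1

def evenQuotientMap : ℤ × ℤ × ℤ →+ ZMod 2 × ZMod m :=
  AddMonoidHom.mk' (fun x => (x.2.1, evenLinearForm k x)) fun x y => by
    simp only [evenLinearForm, Prod.fst_add, Prod.snd_add, Prod.mk_add_mk]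
    push_cast
    ring_nf

lemma evenQuotientMap_eq_zero_iff (x : ℤ × ℤ × ℤ) :
    evenQuotientMap k m x = 0 ↔ 2 ∣ x.2.1 ∧ (m : ℤ) ∣ evenLinearForm k x := by
  simp only [evenQuotientMap, AddMonoidHom.mk'_apply, Prod.mk_eq_zero,
    ZMod.intCast_zmod_eq_zero_iff_dvd, Nat.cast_ofNat]

lemma evenQuotientMap_surjective : Function.Surjective (evenQuotientMap k m) := by
  rintro ⟨u, w⟩
  obtain ⟨a, rfl⟩ := ZMod.intCast_surjective u
  obtain ⟨c, rfl⟩ := ZMod.intCast_surjective w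
  refine ⟨(c - 4 * k ^ 2 * (k - 1) * (2 * k + 1) * a, a, 0), ?_⟩
  simp only [evenQuotientMap, evenLinearForm, AddMonoidHom.mk'_apply]
  ring_nf

theorem relationSubgroup_eq_ker_evenQuotientMap (hm : (m : ℤ) = 4 * k * (2 * k - 1) ^ 2) :
    relationSubgroup (2 * k) = (evenQuotientMap k m).ker := by
  refine le_antisymm ?_ fun x hx => ?_
  · simp only [relationSubgroup_le_iff, AddMonoidHom.mem_ker, evenQuotientMap_eq_zero_iff,
      evenLinearForm, hm]
    refine ⟨⟨⟨0, by ring⟩, ⟨1, by ring⟩⟩, ⟨⟨0, by ring⟩, ⟨2 * k * (k - 1), by ring⟩⟩,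
      ⟨⟨1, by ring⟩, ⟨0, by ring⟩⟩⟩
  · obtain ⟨x₁, x₂, x₃⟩ := x
    obtain ⟨⟨s, rfl⟩, u, hu⟩ := (evenQuotientMap_eq_zero_iff k m _).1 hx
    obtain rfl : x₁ = m * u - 8 * k ^ 2 * (k - 1) * x₃
        - 4 * k ^ 2 * (k - 1) * (2 * k + 1) * (2 * s) := by
      simp only [evenLinearForm] at hu; linarith
    convert zsmul_add_zsmul_add_zsmul_mem_relationSubgroup (2 * k)
      ((2 * k - 1) ^ 2 * u - 2 * k * (k - 1) * x₃ - 2 * k * (k - 1) * (2 * k + 1) * s)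
      (x₃ + (2 * k + 1) * s - 2 * u) s using 1
    simp only [hm, Prod.smul_mk, smul_eq_mul, Prod.mk_add_mk, Prod.mk.injEq]
    exact ⟨by ring, by ring, by ring⟩

end Even

theorem statement10_general (n : ℕ)
    (S : AddSubgroup (ℤ × ℤ × ℤ))
    (hS : S = AddSubgroup.closure
      {((2 * n : ℤ), (0 : ℤ), (2 : ℤ)), ((0 : ℤ), (0 : ℤ), ((n : ℤ) - 1) ^ 2),
        ((0 : ℤ), (2 : ℤ), -((n : ℤ) + 1))}) :
    (Odd n → Nonempty ((ℤ × ℤ × ℤ) ⧸ S ≃+ ZMod 2 × ZMod 2 × ZMod (n * (n - 1) ^ 2))) ∧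
    (Even n → Nonempty ((ℤ × ℤ × ℤ) ⧸ S ≃+ ZMod 2 × ZMod (2 * n * (n - 1) ^ 2))) := by
  change S = relationSubgroup n at hS
  -- `n - 1` truncates only at `n = 0`, where the factor `n` makes both sides vanish.
  have hcast : ((n * (n - 1) ^ 2 : ℕ) : ℤ) = n * ((n : ℤ) - 1) ^ 2 := by
    rcases n with _ | n <;> simp
  subst hS
  refine ⟨fun ⟨k, hk⟩ => ?_, fun ⟨k, hk⟩ => ?_⟩
  · have hnk : (n : ℤ) = 2 * k + 1 := by exact_mod_cast hk
    rw [hnk]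
    refine QuotientAddGroup.nonempty_addEquiv_of_ker_eq _ (oddQuotientMap_surjective _ _)
      (relationSubgroup_eq_ker_oddQuotientMap k _ ?_)
    rw [hcast, hnk]
    ring
  · have hnk : (n : ℤ) = 2 * k := by rw [hk]; push_cast; ring
    rw [hnk]
    refine QuotientAddGroup.nonempty_addEquiv_of_ker_eq _ (evenQuotientMap_surjective _ _)
      (relationSubgroup_eq_ker_evenQuotientMap k _ ?_)
    rw [mul_assoc, Nat.cast_mul, hcast, hnk]
    ring

/-- Let `n ≥ 2` and let `G` be the abelian group with presentation
`⟨a, d, A | A² = a^{-2n}, A^{(n-1)²} = 1, d² = A^{n+1}⟩` (in the category of abelian groups),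
i.e. the quotient of `ℤ³` (with coordinates corresponding to `a, d, A`) by the subgroup
generated by the relation vectors `(2n, 0, 2)`, `(0, 0, (n-1)²)` and `(0, 2, -(n+1))`.
If `n` is odd then `G ≅ ℤ/2 × ℤ/2 × ℤ/(n(n-1)²)`, and if `n` is even then
`G ≅ ℤ/2 × ℤ/(2n(n-1)²)`. -/
theorem statement10 (n : ℕ) (hn : 2 ≤ n)
    (S : AddSubgroup (ℤ × ℤ × ℤ))
    (hS : S = AddSubgroup.closure
      {((2 * n : ℤ), (0 : ℤ), (2 : ℤ)), ((0 : ℤ), (0 : ℤ), ((n : ℤ) - 1) ^ 2),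
        ((0 : ℤ), (2 : ℤ), -((n : ℤ) + 1))}) :
    (Odd n → Nonempty ((ℤ × ℤ × ℤ) ⧸ S ≃+ ZMod 2 × ZMod 2 × ZMod (n * (n - 1) ^ 2))) ∧
    (Even n → Nonempty ((ℤ × ℤ × ℤ) ⧸ S ≃+ ZMod 2 × ZMod (2 * n * (n - 1) ^ 2))) :=
  statement10_general n S hS
end

section
/- Let k ≥ 3, n ≥ 1. Let σ ∈ S_{2n+2} act on Z^{2n+1} as follows: writing x_1, ..., x_{2n+1} for the standard basis and setting x_{2n+2} = -(x_1 + ⋯ + x_{2n+1}), the action sends x_i to x_{σ(i)}. Let φ: Z^{2n+1} → Z/kZ be given by φ(γ) = Σ_{i=1}^{2n+1} (-1)^{i+1} γ_i mod k. If σ preserves parity (σ(q) ≡ q mod 2 for all q) or reverses parity (σ(q) ≢ q mod 2 for all q), then the induced automorphism of Z^{2n+1} maps ker(φ) onto ker(φ). -/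
/-!
Every class `x_j` is sent by `φ` to `(-1)^j`; for the last one this holds because
`1 - 1 + ⋯ + 1 = 1` has an odd number of terms. A parity-preserving (resp. reversing) `σ` therefore
satisfies `φ ∘ T = φ` (resp. `-φ`) on the basis, so `T⁻¹(ker φ) = ker φ`. Since the `x_j` are
permuted by `T`, all basis vectors lie in its image, so `T` is onto and `T(ker φ) = ker φ`.
-/

/-- The homology classes `x_1, ..., x_{2n+2}` of loops around the punctures, as elements of
`ℤ^{2n+1} = H_1` (modeled by `Fin (2n+1) → ℤ`): for `i ≤ 2n+1` the class `x_i` is the `i`-th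
standard basis vector, and `x_{2n+2} = -(x_1 + ⋯ + x_{2n+1})` (0-based indexing). -/
def basisX (n : ℕ) (i : Fin (2 * n + 2)) : Fin (2 * n + 1) → ℤ :=
  if h : (i : ℕ) < 2 * n + 1 then Pi.single (⟨i, h⟩ : Fin (2 * n + 1)) 1
  else -(∑ j : Fin (2 * n + 1), Pi.single j 1)

lemma basisX_castSucc (n : ℕ) (i : Fin (2 * n + 1)) :
    basisX n i.castSucc = Pi.single i 1 :=
  dif_pos i.isLt

lemma basisX_last (n : ℕ) :
    basisX n (Fin.last (2 * n + 1)) = -∑ j : Fin (2 * n + 1), Pi.single j 1 := by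
  simp [basisX]

lemma neg_one_pow_eq_of_mod_two_eq {R : Type*} [Ring R] {a b : ℕ} (h : a % 2 = b % 2) :
    (-1 : R) ^ a = (-1) ^ b := by
  rw [neg_one_pow_eq_pow_mod_two, h, ← neg_one_pow_eq_pow_mod_two]

lemma neg_one_pow_eq_neg_of_mod_two_ne {R : Type*} [Ring R] {a b : ℕ} (h : a % 2 ≠ b % 2) :
    (-1 : R) ^ a = -(-1) ^ b := by
  rw [← neg_one_pow_eq_of_mod_two_eq (R := R) (a := b + 1) (by omega), pow_succ, mul_neg_one]

lemma AddMonoidHom.surjective_of_single_mem_range {ι G : Type*} [Fintype ι] [DecidableEq ι]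
    [AddGroup G] (f : G →+ (ι → ℤ)) (h : ∀ i, Pi.single i 1 ∈ f.range) : Function.Surjective f := by
  intro γ
  rw [← AddMonoidHom.mem_range, ← Finset.univ_sum_single γ]
  refine AddSubgroup.sum_mem _ fun i _ => ?_
  rw [← mul_one (γ i), ← smul_eq_mul, Pi.single_smul']
  exact AddSubgroup.zsmul_mem _ (h i) _

section AlternatingForm

variable {n : ℕ} {R : Type*} [Ring R] {φ : (Fin (2 * n + 1) → ℤ) →+ R}

lemma apply_basisX_of_apply_single (hφ : ∀ i, φ (Pi.single i 1) = (-1) ^ (i : ℕ))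
    (j : Fin (2 * n + 2)) : φ (basisX n j) = (-1) ^ (j : ℕ) := by
  induction j using Fin.lastCases with
  | cast i => rw [basisX_castSucc, hφ, Fin.val_castSucc]
  | last =>
    have hodd : ¬Even (2 * n + 1) := Nat.not_even_iff_odd.mpr (odd_two_mul_add_one n)
    rw [basisX_last, map_neg, map_sum, Fintype.sum_congr _ _ hφ,
      Fin.sum_univ_eq_sum_range (fun i => (-1 : R) ^ i), neg_one_geom_sum, if_neg hodd,
      Fin.val_last, (odd_two_mul_add_one n).neg_one_pow]

lemma comp_eq_or_eq_neg_of_parity (hφ : ∀ i, φ (Pi.single i 1) = (-1) ^ (i : ℕ))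
    {σ : Equiv.Perm (Fin (2 * n + 2))}
    (hσ : (∀ q, ((σ q : ℕ) % 2 = (q : ℕ) % 2)) ∨ (∀ q, ((σ q : ℕ) % 2 ≠ (q : ℕ) % 2)))
    {T : (Fin (2 * n + 1) → ℤ) →+ (Fin (2 * n + 1) → ℤ)}
    (hT : ∀ i, T (basisX n i) = basisX n (σ i)) :
    φ.comp T = φ ∨ φ.comp T = -φ := by
  have hφT (i : Fin (2 * n + 1)) :
      φ (T (Pi.single i 1)) = (-1) ^ (σ i.castSucc : ℕ) := by
    rw [← basisX_castSucc, hT, apply_basisX_of_apply_single hφ]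
  rcases hσ with hpres | hrev
  · left
    ext i
    simp only [AddMonoidHom.comp_apply, AddMonoidHom.single_apply, hφT, hφ]
    exact neg_one_pow_eq_of_mod_two_eq (hpres _)
  · right
    ext i
    simp only [AddMonoidHom.comp_apply, AddMonoidHom.neg_apply, AddMonoidHom.single_apply, hφT, hφ]
    exact neg_one_pow_eq_neg_of_mod_two_ne (hrev _)

end AlternatingForm

theorem statement13_general (n k : ℕ)
    (σ : Equiv.Perm (Fin (2 * n + 2)))
    (hσ : (∀ q, ((σ q : ℕ) % 2 = (q : ℕ) % 2)) ∨ (∀ q, ((σ q : ℕ) % 2 ≠ (q : ℕ) % 2)))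
    (φ : (Fin (2 * n + 1) → ℤ) →+ ZMod k)
    (hφ : ∀ γ : Fin (2 * n + 1) → ℤ,
      φ γ = ∑ i : Fin (2 * n + 1), (-1 : ZMod k) ^ (i : ℕ) * ((γ i : ℤ) : ZMod k))
    (T : (Fin (2 * n + 1) → ℤ) →+ (Fin (2 * n + 1) → ℤ))
    (hT : ∀ i : Fin (2 * n + 2), T (basisX n i) = basisX n (σ i)) :
    (φ.ker).map T = φ.ker := by
  have hφ_single (i : Fin (2 * n + 1)) : φ (Pi.single i 1) = (-1) ^ (i : ℕ) := by
    simp [hφ, Pi.single_apply]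
  have hT_surj : Function.Surjective T :=
    T.surjective_of_single_mem_range fun i =>
      ⟨basisX n (σ.symm i.castSucc), by rw [hT, σ.apply_symm_apply, basisX_castSucc]⟩
  have hcomap : φ.ker.comap T = φ.ker := by
    rw [AddMonoidHom.comap_ker]
    rcases comp_eq_or_eq_neg_of_parity hφ_single hσ hT with h | h <;> rw [h]
    ext; simp
  rw [← hcomap, AddSubgroup.map_comap_eq_self_of_surjective hT_surj, hcomap]

/-- Let `k ≥ 3`, `n ≥ 1`, and let `σ ∈ S_{2n+2}` act on `ℤ^{2n+1}` by sending
`x_i` to `x_{σ(i)}` (where `x_1, ..., x_{2n+1}` is the standard basis and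
`x_{2n+2} = -(x_1 + ⋯ + x_{2n+1})`); i.e. let `T` be the induced endomorphism of `ℤ^{2n+1}`.
Let `φ : ℤ^{2n+1} → ℤ/kℤ` be `φ(γ) = Σ (-1)^{i+1} γ_i mod k`.  If `σ` preserves parity
(`σ(q) ≡ q mod 2` for all `q`) or reverses parity (`σ(q) ≢ q mod 2` for all `q`), then
`T` maps `ker φ` onto `ker φ`. -/
theorem statement13 (n k : ℕ) (hn : 1 ≤ n) (hk : 3 ≤ k)
    (σ : Equiv.Perm (Fin (2 * n + 2)))
    (hσ : (∀ q, ((σ q : ℕ) % 2 = (q : ℕ) % 2)) ∨ (∀ q, ((σ q : ℕ) % 2 ≠ (q : ℕ) % 2)))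
    (φ : (Fin (2 * n + 1) → ℤ) →+ ZMod k)
    (hφ : ∀ γ : Fin (2 * n + 1) → ℤ,
      φ γ = ∑ i : Fin (2 * n + 1), (-1 : ZMod k) ^ (i : ℕ) * ((γ i : ℤ) : ZMod k))
    (T : (Fin (2 * n + 1) → ℤ) →+ (Fin (2 * n + 1) → ℤ))
    (hT : ∀ i : Fin (2 * n + 2), T (basisX n i) = basisX n (σ i)) :
    (φ.ker).map T = φ.ker :=
  statement13_general n k σ hσ φ hφ T hT
end

section
/- Let k ≥ 3, n ≥ 1, and let σ ∈ S_{2n+2} be a permutation that is neither parity-preserving nor parity-reversing. With the action of σ on Z^{2n+1} and the homomorphism φ: Z^{2n+1} → Z/kZ defined as follows (standard basis x_1,...,x_{2n+1}, x_{2n+2} := -(x_1+⋯+x_{2n+1}), σ sends x_i to x_{σ(i)}, and φ(γ) = Σ(-1)^{i+1}γ_i mod k), the induced automorphism of Z^{2n+1} does not preserve ker(φ): there exists γ ∈ ker(φ) whose image under σ is not in ker(φ). -/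
theorem sum_neg_one_pow_mul_basisX {R : Type*} [Ring R] (n : ℕ) (i : Fin (2 * n + 2)) :
    ∑ j : Fin (2 * n + 1), (-1 : R) ^ (j : ℕ) * ((basisX n i j : ℤ) : R) = (-1) ^ (i : ℕ) := by
  unfold basisX
  split
  case isTrue hi =>
    rw [Finset.sum_eq_single (⟨i, hi⟩ : Fin (2 * n + 1))]
    · simp
    · intro j _ hj
      simp [hj]
    · simp
  case isFalse hlt =>
    have hi : (i : ℕ) = 2 * n + 1 := by omega
    have hodd : Odd (2 * n + 1) := odd_two_mul_add_one n
    simp only [Pi.neg_apply, Finset.sum_apply, Pi.single_apply, Finset.sum_ite_eq,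
      Finset.mem_univ, if_true, Int.cast_neg, Int.cast_one, mul_neg_one, Finset.sum_neg_distrib]
    rw [Fin.sum_univ_eq_sum_range (fun j => (-1 : R) ^ j), neg_one_geom_sum,
      if_neg (Nat.not_even_iff_odd.2 hodd), hi, hodd.neg_one_pow]

theorem ZMod.two_ne_zero_of_three_le {k : ℕ} (hk : 3 ≤ k) : (2 : ZMod k) ≠ 0 := by
  rw [Ne, ← Nat.cast_two, ZMod.natCast_eq_zero_iff]
  intro hdvd
  have := Nat.le_of_dvd two_pos hdvd
  omega

theorem neg_one_pow_mul_self {R : Type*} [Monoid R] [HasDistribNeg R] (m : ℕ) :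
    (-1 : R) ^ m * (-1) ^ m = 1 := by
  rw [← pow_add, Even.neg_one_pow ⟨m, rfl⟩]

theorem statement14_general (n k : ℕ) (hk : 3 ≤ k)
    (σ : Equiv.Perm (Fin (2 * n + 2)))
    (hσ1 : ¬ (∀ q, ((σ q : ℕ) % 2 = (q : ℕ) % 2)))
    (hσ2 : ¬ (∀ q, ((σ q : ℕ) % 2 ≠ (q : ℕ) % 2)))
    (φ : (Fin (2 * n + 1) → ℤ) →+ ZMod k)
    (hφ : ∀ γ : Fin (2 * n + 1) → ℤ,
      φ γ = ∑ i : Fin (2 * n + 1), (-1 : ZMod k) ^ (i : ℕ) * ((γ i : ℤ) : ZMod k))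
    (T : (Fin (2 * n + 1) → ℤ) →+ (Fin (2 * n + 1) → ℤ))
    (hT : ∀ i : Fin (2 * n + 2), T (basisX n i) = basisX n (σ i)) :
    ∃ γ : Fin (2 * n + 1) → ℤ, φ γ = 0 ∧ φ (T γ) ≠ 0 := by
  push Not at hσ1 hσ2
  obtain ⟨b, hb⟩ := hσ1
  obtain ⟨a, ha⟩ := hσ2
  have hφx (i : Fin (2 * n + 2)) : φ (basisX n i) = (-1) ^ (i : ℕ) := by
    rw [hφ, sum_neg_one_pow_mul_basisX]
  have hσa : (-1 : ZMod k) ^ (σ a : ℕ) = (-1) ^ (a : ℕ) :=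
    neg_one_pow_congr (by simp only [Nat.even_iff, ha])
  have hσb : (-1 : ZMod k) ^ (σ b : ℕ) = -(-1) ^ (b : ℕ) := by
    rw [neg_one_pow_congr (n := b + 1) (by simp only [Nat.even_iff]; omega), pow_succ, mul_neg_one]
  refine ⟨(-1) ^ (a : ℕ) • basisX n a - (-1) ^ (b : ℕ) • basisX n b, ?_, ?_⟩
  · rw [map_sub, map_zsmul, map_zsmul, hφx, hφx]
    simp only [zsmul_eq_mul, Int.cast_pow, Int.cast_neg, Int.cast_one, neg_one_pow_mul_self,
      sub_self]
  · rw [map_sub, map_zsmul, map_zsmul, hT, hT, map_sub, map_zsmul, map_zsmul, hφx, hφx, hσa,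
      hσb]
    simp only [zsmul_eq_mul, Int.cast_pow, Int.cast_neg, Int.cast_one, mul_neg,
      neg_one_pow_mul_self, sub_neg_eq_add, one_add_one_eq_two]
    exact ZMod.two_ne_zero_of_three_le hk

/-- Let `k ≥ 3`, `n ≥ 1`, and let `σ ∈ S_{2n+2}` be neither parity-preserving
nor parity-reversing.  With the action of `σ` on `ℤ^{2n+1}` (sending `x_i` to `x_{σ(i)}`,
where `x_{2n+2} = -(x_1 + ⋯ + x_{2n+1})`) given by the endomorphism `T`, and
`φ(γ) = Σ (-1)^{i+1} γ_i mod k`, the map `T` does not preserve `ker φ`: there exists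
`γ ∈ ker φ` with `T γ ∉ ker φ`. -/
theorem statement14 (n k : ℕ) (hn : 1 ≤ n) (hk : 3 ≤ k)
    (σ : Equiv.Perm (Fin (2 * n + 2)))
    (hσ1 : ¬ (∀ q, ((σ q : ℕ) % 2 = (q : ℕ) % 2)))
    (hσ2 : ¬ (∀ q, ((σ q : ℕ) % 2 ≠ (q : ℕ) % 2)))
    (φ : (Fin (2 * n + 1) → ℤ) →+ ZMod k)
    (hφ : ∀ γ : Fin (2 * n + 1) → ℤ,
      φ γ = ∑ i : Fin (2 * n + 1), (-1 : ZMod k) ^ (i : ℕ) * ((γ i : ℤ) : ZMod k))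
    (T : (Fin (2 * n + 1) → ℤ) →+ (Fin (2 * n + 1) → ℤ))
    (hT : ∀ i : Fin (2 * n + 2), T (basisX n i) = basisX n (σ i)) :
    ∃ γ : Fin (2 * n + 1) → ℤ, φ γ = 0 ∧ φ (T γ) ≠ 0 :=
  statement14_general n k hk σ hσ1 hσ2 φ hφ T hT
end

section
/- Let n ≥ 1 and k ≥ 3. Consider the subgroup W_{2n+2} ≤ S_{2n+2} of parity-preserving or parity-reversing permutations, and the transpositions x_i = (2i-1, 2i+1) and y_i = (2i, 2i+2) for 1 ≤ i ≤ n, together with z = (1 2)(3 4)⋯(2n+1 2n+2). Then {x_1, ..., x_n, y_1, ..., y_n, z} generates W_{2n+2}. -/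
/-- The set `W_{2n+2}` of permutations of `{1, ..., 2n+2}` (modeled by `Fin (2n+2)`,
0-based) that either preserve parity (`σ(q) ≡ q (mod 2)` for all `q`) or reverse parity
(`σ(q) ≢ q (mod 2)` for all `q`). -/
def Wset (n : ℕ) : Set (Equiv.Perm (Fin (2 * n + 2))) :=
  {f | (∀ q, ((f q : ℕ) % 2 = (q : ℕ) % 2)) ∨ (∀ q, ((f q : ℕ) % 2 ≠ (q : ℕ) % 2))}

/-- The transposition `x_i = (2i-1, 2i+1)` (1-based), for `i = 1, ..., n`;
with `i : Fin n` the 0-based form is `(2i, 2i+2)`. -/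
def xGen (n : ℕ) (i : Fin n) : Equiv.Perm (Fin (2 * n + 2)) :=
  Equiv.swap ⟨2 * (i : ℕ), by have := i.isLt; omega⟩ ⟨2 * (i : ℕ) + 2, by have := i.isLt; omega⟩

/-- The transposition `y_i = (2i, 2i+2)` (1-based), for `i = 1, ..., n`;
with `i : Fin n` the 0-based form is `(2i+1, 2i+3)`. -/
def yGen (n : ℕ) (i : Fin n) : Equiv.Perm (Fin (2 * n + 2)) :=
  Equiv.swap ⟨2 * (i : ℕ) + 1, by have := i.isLt; omega⟩
    ⟨2 * (i : ℕ) + 3, by have := i.isLt; omega⟩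

/-- The parity-reversing involution `z = (1 2)(3 4)⋯(2n+1 2n+2)` (1-based). -/
def zGen (n : ℕ) : Equiv.Perm (Fin (2 * n + 2)) :=
  ((List.finRange (n + 1)).map (fun j : Fin (n + 1) => Equiv.swap
    (⟨2 * (j : ℕ), by have := j.isLt; omega⟩ : Fin (2 * n + 2))
    ⟨2 * (j : ℕ) + 1, by have := j.isLt; omega⟩)).prod

/-! The generators `x_i`, `y_i` are exactly the transpositions `(q, q + 2)`. These connect any two
points of equal parity, so they generate every parity-preserving permutation. A parity-reversing
`f` is then `(f * z) * z⁻¹` with `f * z` parity-preserving, and conversely all generators lie in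
`W_{2n+2}` since `z` reverses parity. -/

open Equiv MulAction

section Parity

variable {m : ℕ}

lemma swap_apply_mod_two {a b : Fin m} (hab : (a : ℕ) % 2 = b % 2) (q : Fin m) :
    (swap a b q : ℕ) % 2 = q % 2 := by
  rw [swap_apply_def]
  split_ifs with ha hb
  · rw [ha, hab]
  · rw [hb, hab]
  · rfl

lemma mem_orbit_of_mod_two_eq {C : Subgroup (Perm (Fin m))}
    (hC : ∀ (q : ℕ) (h : q + 2 < m), swap ⟨q, by omega⟩ ⟨q + 2, h⟩ ∈ C)
    {p q : Fin m} (hpq : (p : ℕ) % 2 = q % 2) : p ∈ orbit C q := by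
  wlog hle : (q : ℕ) ≤ p generalizing p q
  · exact mem_orbit_symm.mp (this hpq.symm (by omega))
  obtain ⟨d, hd⟩ : ∃ d, (p : ℕ) = q + 2 * d := ⟨(p - q) / 2, by omega⟩
  induction d generalizing p with
  | zero =>
    obtain rfl : p = q := Fin.ext (by omega)
    exact mem_orbit_self p
  | succ d ih =>
    let p' : Fin m := ⟨p - 2, by omega⟩
    obtain ⟨⟨g, hg⟩, hgq⟩ := mem_orbit_iff.mp (ih (p := p') (by simp [p']; omega)
      (by simp [p']; omega) (by simp [p']; omega))
    refine mem_orbit_iff.mpr ⟨⟨swap p' p * g, C.mul_mem ?_ hg⟩, ?_⟩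
    · convert hC (p - 2) (by omega) using 2
      exact Fin.ext (by simp; omega)
    · change swap p' p (g q) = p
      rw [show g q = p' from hgq, swap_apply_left]

end Parity

section Generators

variable (n : ℕ)

lemma swap_mem_range_xGen_union_range_yGen (q : ℕ) (h : q + 2 < 2 * n + 2) :
    swap ⟨q, by omega⟩ ⟨q + 2, h⟩ ∈ Set.range (xGen n) ∪ Set.range (yGen n) := by
  rcases Nat.even_or_odd' q with ⟨i, rfl | rfl⟩
  · exact Or.inl ⟨⟨i, by omega⟩, rfl⟩
  · exact Or.inr ⟨⟨i, by omega⟩, rfl⟩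

lemma isSwap_of_mem_range_xGen_union_range_yGen {f : Perm (Fin (2 * n + 2))}
    (hf : f ∈ Set.range (xGen n) ∪ Set.range (yGen n)) : f.IsSwap := by
  rcases hf with ⟨i, rfl⟩ | ⟨i, rfl⟩ <;> exact ⟨_, _, Fin.ne_of_val_ne (by simp), rfl⟩

lemma mem_closure_xGen_yGen_of_mod_two_eq {f : Perm (Fin (2 * n + 2))}
    (hf : ∀ q, (f q : ℕ) % 2 = q % 2) :
    f ∈ Subgroup.closure (Set.range (xGen n) ∪ Set.range (yGen n)) :=
  (mem_closure_isSwap fun _ ↦ isSwap_of_mem_range_xGen_union_range_yGen n).mpr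
    ⟨Set.toFinite _, fun q ↦ mem_orbit_of_mod_two_eq
      (fun p h ↦ Subgroup.subset_closure (swap_mem_range_xGen_union_range_yGen n p h)) (hf q)⟩

/-- The index `j` of the factor `(2j, 2j+1)` of `zGen n` that moves `q`. -/
def pairIndex (q : Fin (2 * n + 2)) : Fin (n + 1) :=
  ⟨q / 2, by omega⟩

def pairSwap (j : Fin (n + 1)) : Perm (Fin (2 * n + 2)) :=
  swap ⟨2 * j, by omega⟩ ⟨2 * j + 1, by omega⟩

variable {n}

lemma pairIndex_pairSwap_apply (j : Fin (n + 1)) (q : Fin (2 * n + 2)) :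
    pairIndex n (pairSwap n j q) = pairIndex n q := by
  rw [pairSwap, swap_apply_def]
  split_ifs with h₁ h₂ <;> simp only [pairIndex, Fin.ext_iff] at * <;> omega

lemma pairSwap_apply_of_ne {j : Fin (n + 1)} {q : Fin (2 * n + 2)} (h : pairIndex n q ≠ j) :
    pairSwap n j q = q := by
  replace h : (q : ℕ) / 2 ≠ j := fun e ↦ h (Fin.ext e)
  exact swap_apply_of_ne_of_ne (Fin.ne_of_val_ne (by simp only; omega))
    (Fin.ne_of_val_ne (by simp only; omega))

lemma pairSwap_pairIndex_apply_mod_two (q : Fin (2 * n + 2)) :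
    (pairSwap n (pairIndex n q) q : ℕ) % 2 ≠ q % 2 := by
  rw [pairSwap, swap_apply_def]
  split_ifs with h₁ h₂ <;> simp only [pairIndex, Fin.ext_iff] at * <;> omega

lemma list_prod_map_pairSwap_apply {l : List (Fin (n + 1))} {q : Fin (2 * n + 2)}
    (h : pairIndex n q ∉ l) : (l.map (pairSwap n)).prod q = q := by
  suffices (l.map (pairSwap n)).prod ∈ stabilizer (Perm (Fin (2 * n + 2))) q from this
  refine Subgroup.list_prod_mem _ fun g hg ↦ ?_
  obtain ⟨j, hj, rfl⟩ := List.mem_map.mp hg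
  exact pairSwap_apply_of_ne fun hq ↦ h (hq ▸ hj)

/-- Of the disjoint factors of `zGen n`, only the one indexed by `pairIndex n q` moves `q`. -/
lemma zGen_apply (q : Fin (2 * n + 2)) : zGen n q = pairSwap n (pairIndex n q) q := by
  obtain ⟨s, t, hst⟩ := List.append_of_mem (List.mem_finRange (pairIndex n q))
  have hnodup := hst ▸ List.nodup_finRange (n + 1)
  obtain ⟨hs, ht⟩ : pairIndex n q ∉ s ∧ pairIndex n q ∉ t := by
    simpa [not_or] using (List.nodup_cons.mp (List.nodup_middle.mp hnodup)).1
  change ((List.finRange (n + 1)).map (pairSwap n)).prod q = _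
  rw [hst, List.map_append, List.map_cons, List.prod_append, List.prod_cons, Perm.mul_apply,
    Perm.mul_apply, list_prod_map_pairSwap_apply ht, list_prod_map_pairSwap_apply]
  rwa [pairIndex_pairSwap_apply]

lemma zGen_apply_mod_two (q : Fin (2 * n + 2)) : (zGen n q : ℕ) % 2 ≠ q % 2 :=
  zGen_apply q ▸ pairSwap_pairIndex_apply_mod_two q

end Generators

theorem statement19_general (n : ℕ)
    (H : Subgroup (Equiv.Perm (Fin (2 * n + 2))))
    (hH : (H : Set (Equiv.Perm (Fin (2 * n + 2)))) = Wset n) :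
    Subgroup.closure (Set.range (xGen n) ∪ Set.range (yGen n) ∪ {zGen n}) = H := by
  have hxy : Subgroup.closure (Set.range (xGen n) ∪ Set.range (yGen n)) ≤
      Subgroup.closure (Set.range (xGen n) ∪ Set.range (yGen n) ∪ {zGen n}) :=
    Subgroup.closure_mono Set.subset_union_left
  have hz : zGen n ∈ Subgroup.closure (Set.range (xGen n) ∪ Set.range (yGen n) ∪ {zGen n}) :=
    Subgroup.subset_closure (Or.inr rfl)
  apply le_antisymm
  · rw [Subgroup.closure_le, hH]
    rintro _ ((⟨i, rfl⟩ | ⟨i, rfl⟩) | rfl)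
    · exact Or.inl (swap_apply_mod_two (by simp))
    · exact Or.inl (swap_apply_mod_two (by simp))
    · exact Or.inr zGen_apply_mod_two
  · intro f hf
    rcases (show f ∈ Wset n from hH ▸ hf) with hf | hf
    · exact hxy (mem_closure_xGen_yGen_of_mod_two_eq n hf)
    · -- a product of two parity-reversing permutations preserves parity
      have hfz := mem_closure_xGen_yGen_of_mod_two_eq n (f := f * zGen n) fun q ↦ by
        have := hf (zGen n q)
        have := zGen_apply_mod_two q
        simp only [Perm.mul_apply]
        omega
      simpa using Subgroup.mul_mem _ (hxy hfz) (Subgroup.inv_mem _ hz)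

/-- For `n ≥ 1` and `k ≥ 3`, the subgroup `W_{2n+2} ≤ S_{2n+2}` of
parity-preserving or parity-reversing permutations is generated by the transpositions
`x_i = (2i-1, 2i+1)`, `y_i = (2i, 2i+2)` (`1 ≤ i ≤ n`) together with
`z = (1 2)(3 4)⋯(2n+1 2n+2)`. -/
theorem statement19 (n k : ℕ) (hn : 1 ≤ n) (hk : 3 ≤ k)
    (H : Subgroup (Equiv.Perm (Fin (2 * n + 2))))
    (hH : (H : Set (Equiv.Perm (Fin (2 * n + 2)))) = Wset n) :
    Subgroup.closure (Set.range (xGen n) ∪ Set.range (yGen n) ∪ {zGen n}) = H :=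
  statement19_general n H hH
end
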